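/- Let α : ℕ → ℂ be a finitely supported sequence and let (e_j)_{j∈ℕ} be the standard orthonormal basis of ℓ²(ℕ, ℂ). Let T be the bounded operator T = ∑_j α_j ( ⟨·, e_j⟩ e_{j+1} - ⟨·, e_{j+1}⟩ e_j ) (a finite sum of rank-two operators). Then sup_j |α_j| ≤ ‖T‖ ≤ 2 · sup_j |α_j|, where ‖T‖ is the operator norm. -/

import Mathlib

open scoped ComplexOrder

noncomputable section

/-- The Hilbert space `ℓ²(ℕ, ℂ)`. -/
abbrev Hl2 : Type := lp (fun _ : ℕ => ℂ) 2

/-- The standard orthonormal basis vectors of `ℓ²(ℕ, ℂ)`. -/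
def e (j : ℕ) : Hl2 := lp.single 2 j 1

/-- The rank-two operator `v ↦ ⟨v, e_j⟩ e_{j+1} - ⟨v, e_{j+1}⟩ e_j`. -/
def rk2 (j : ℕ) : Hl2 →L[ℂ] Hl2 :=
  (innerSL ℂ (e j)).smulRight (e (j + 1)) - (innerSL ℂ (e (j + 1))).smulRight (e j)

/-!
`T` is the difference of the two weighted shifts `∑ α_j ⟨·, e_j⟩ e_{j+1}` and
`∑ α_j ⟨·, e_{j+1}⟩ e_j`. Each maps an orthonormal family onto an orthonormal family with
weights bounded by `sup |α_j|`, so by Bessel and Pythagoras each has norm at most `sup |α_j|`,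
giving the upper bound. For the lower bound, the matrix coefficient `⟨e_{k+1}, T e_k⟩` is
exactly `α_k`, since only the `j = k` summand of `T` can send `e_k` to a multiple of `e_{k+1}`.
-/

section WeightedShift

variable {𝕜 E ι : Type*} [RCLike 𝕜] [NormedAddCommGroup E] [InnerProductSpace 𝕜 E]

lemma Orthonormal.norm_sum_smul_sq {w : ι → E} (hw : Orthonormal 𝕜 w) (s : Finset ι)
    (a : ι → 𝕜) : ‖∑ i ∈ s, a i • w i‖ ^ 2 = ∑ i ∈ s, ‖a i‖ ^ 2 := by
  rw [← inner_self_eq_norm_sq (𝕜 := 𝕜), hw.inner_sum, map_sum]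
  refine Finset.sum_congr rfl fun i _ => ?_
  rw [RCLike.conj_mul]
  norm_cast

lemma Orthonormal.norm_sum_smul_smulRight_le {u w : ι → E} (hu : Orthonormal 𝕜 u)
    (hw : Orthonormal 𝕜 w) (s : Finset ι) (c : ι → 𝕜) {M : ℝ} (hM : 0 ≤ M)
    (hc : ∀ i ∈ s, ‖c i‖ ≤ M) :
    ‖∑ i ∈ s, c i • (innerSL 𝕜 (u i)).smulRight (w i)‖ ≤ M := by
  refine ContinuousLinearMap.opNorm_le_bound _ hM fun v => ?_
  have happly : (∑ i ∈ s, c i • (innerSL 𝕜 (u i)).smulRight (w i)) v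
      = ∑ i ∈ s, (c i * inner 𝕜 (u i) v) • w i := by
    simp [mul_smul]
  rw [happly, ← pow_le_pow_iff_left₀ (norm_nonneg _) (by positivity) two_ne_zero]
  calc ‖∑ i ∈ s, (c i * inner 𝕜 (u i) v) • w i‖ ^ 2
      = ∑ i ∈ s, ‖c i‖ ^ 2 * ‖inner 𝕜 (u i) v‖ ^ 2 := by
        simp only [hw.norm_sum_smul_sq, norm_mul, mul_pow]
    _ ≤ ∑ i ∈ s, M ^ 2 * ‖inner 𝕜 (u i) v‖ ^ 2 := by
        gcongr with i hi
        exact hc i hi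
    _ = M ^ 2 * ∑ i ∈ s, ‖inner 𝕜 (u i) v‖ ^ 2 := by rw [Finset.mul_sum]
    _ ≤ M ^ 2 * ‖v‖ ^ 2 := by gcongr; exact hu.sum_inner_products_le v
    _ = (M * ‖v‖) ^ 2 := by ring

end WeightedShift

lemma e_orthonormal : Orthonormal ℂ e := by
  rw [orthonormal_iff_ite]
  intro i j
  simp [e, lp.inner_single_left, lp.single_apply, Pi.single_apply]

lemma norm_sum_smul_rk2_le (s : Finset ℕ) (c : ℕ → ℂ) {M : ℝ} (hM : 0 ≤ M)
    (hc : ∀ j ∈ s, ‖c j‖ ≤ M) : ‖∑ j ∈ s, c j • rk2 j‖ ≤ 2 * M := by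
  have hsplit : ∑ j ∈ s, c j • rk2 j
      = ∑ j ∈ s, c j • (innerSL ℂ (e j)).smulRight (e (j + 1))
        - ∑ j ∈ s, c j • (innerSL ℂ (e (j + 1))).smulRight (e j) := by
    simp only [rk2, smul_sub, Finset.sum_sub_distrib]
  have hsucc : Orthonormal ℂ (fun j => e (j + 1)) := e_orthonormal.comp _ Nat.succ_injective
  calc ‖∑ j ∈ s, c j • rk2 j‖
      ≤ ‖∑ j ∈ s, c j • (innerSL ℂ (e j)).smulRight (e (j + 1))‖
        + ‖∑ j ∈ s, c j • (innerSL ℂ (e (j + 1))).smulRight (e j)‖ := by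
        rw [hsplit]; exact norm_sub_le _ _
    _ ≤ M + M := by
        gcongr
        · exact e_orthonormal.norm_sum_smul_smulRight_le hsucc s c hM hc
        · exact hsucc.norm_sum_smul_smulRight_le e_orthonormal s c hM hc
    _ = 2 * M := by ring

lemma inner_e_succ_rk2_e (j k : ℕ) :
    inner ℂ (e (k + 1)) (rk2 j (e k)) = if j = k then 1 else 0 := by
  have hij : ∀ i j : ℕ, inner ℂ (e i) (e j) = if i = j then (1 : ℂ) else 0 :=
    orthonormal_iff_ite.mp e_orthonormal
  simp only [rk2, sub_apply, ContinuousLinearMap.smulRight_apply,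
    innerSL_apply_apply, inner_sub_right, inner_smul_right, hij]
  rcases eq_or_ne j k with rfl | hjk
  · simp
  · simp [hjk, hjk.symm]
    omega

lemma inner_e_succ_sum_smul_rk2_e (α : ℕ →₀ ℂ) (k : ℕ) :
    inner ℂ (e (k + 1)) ((∑ j ∈ α.support, α j • rk2 j) (e k)) = α k := by
  simp [sum_apply, inner_e_succ_rk2_e, eq_comm]

lemma norm_le_norm_sum_smul_rk2 (α : ℕ →₀ ℂ) (k : ℕ) :
    ‖α k‖ ≤ ‖∑ j ∈ α.support, α j • rk2 j‖ := by
  set T := ∑ j ∈ α.support, α j • rk2 j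
  calc ‖α k‖ = ‖inner ℂ (e (k + 1)) (T (e k))‖ := by rw [inner_e_succ_sum_smul_rk2_e]
    _ ≤ ‖e (k + 1)‖ * (‖T‖ * ‖e k‖) := by
        grw [norm_inner_le_norm, T.le_opNorm]
    _ = ‖T‖ := by simp [e_orthonormal.norm_eq_one]

/-- for a finitely supported `α : ℕ → ℂ`, the operator
`T = ∑_j α_j (⟨·,e_j⟩ e_{j+1} - ⟨·,e_{j+1}⟩ e_j)` satisfies
`sup_j |α_j| ≤ ‖T‖ ≤ 2 sup_j |α_j|`. -/
theorem stmt8 (α : ℕ →₀ ℂ) :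
    (⨆ j : ℕ, ‖α j‖) ≤ ‖∑ j ∈ α.support, α j • rk2 j‖
    ∧ ‖∑ j ∈ α.support, α j • rk2 j‖ ≤ 2 * ⨆ j : ℕ, ‖α j‖ := by
  have hbdd : BddAbove (Set.range fun j => ‖α j‖) :=
    (Set.range_comp norm α ▸ α.finite_range.image norm).bddAbove
  have hle_sup : ∀ j, ‖α j‖ ≤ ⨆ j : ℕ, ‖α j‖ := le_ciSup hbdd
  refine ⟨ciSup_le (norm_le_norm_sum_smul_rk2 α), ?_⟩
  exact norm_sum_smul_rk2_le α.support α ((norm_nonneg _).trans (hle_sup 0))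
    fun j _ => hle_sup j
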